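/- Q_k divides Q_n if and only if k divides n (for k, n ≥ 1). -/

import Mathlib

open SimpleGraph

/-- `H` divides `G`: the edge set of `G` can be partitioned into edge sets of
subgraphs of `G`, each isomorphic to `H`. -/
def GraphDivides {α β : Type} (H : SimpleGraph α) (G : SimpleGraph β) : Prop :=
  ∃ (ι : Type) (f : ι → G.Subgraph),
    (∀ i, Nonempty (H ≃g (f i).coe)) ∧
    ∀ e ∈ G.edgeSet, ∃! i, e ∈ (f i).edgeSet

/-- The `n`-dimensional hypercube graph. -/
def cube (n : ℕ) : SimpleGraph (Fin n → ZMod 2) where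
  Adj x y := hammingDist x y = 1
  symm := ⟨fun x y h => by simpa [hammingDist_comm] using h⟩
  loopless := ⟨fun x h => by simp [hammingDist_self] at h⟩

/-! Inside a piece isomorphic to `Q_k`, every vertex has degree `0` or `k`, and the pieces
partition the `n` edges at a vertex of `Q_n`; hence `k ∣ n`. Conversely, if `H` divides `G₁` and
`G₂` then it divides `G₁ □ G₂` (use the pieces of `G₁` in every layer `G₁ × {b}` and those of
`G₂` in every layer `{a} × G₂`), and `Q_{km+k} ≅ Q_{km} □ Q_k`, so `Q_k ∣ Q_{km}` by induction
on `m`. -/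

theorem graphDivides_iff {α β : Type} {H : SimpleGraph α} {G : SimpleGraph β} :
    GraphDivides H G ↔ ∃ (ι : Type) (f : ι → G.Subgraph),
      (∀ i, Nonempty (H ≃g (f i).coe)) ∧ ∀ x y, G.Adj x y → ∃! i, (f i).Adj x y := by
  simp only [GraphDivides, Sym2.forall, mem_edgeSet, Subgraph.mem_edgeSet]

namespace SimpleGraph.Subgraph

variable {α β : Type} {G₁ : SimpleGraph α} {G₂ : SimpleGraph β}

theorem map_iso_adj {G : SimpleGraph α} (G' : G.Subgraph) (e : G ≃g G₂) (x y : β) :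
    (G'.map e.toHom).Adj x y ↔ G'.Adj (e.symm x) (e.symm y) := by
  refine ⟨?_, fun h => ⟨_, _, h, e.apply_symm_apply x, e.apply_symm_apply y⟩⟩
  rintro ⟨a, b, h, rfl, rfl⟩
  simpa using h

theorem map_boxProdLeft_adj (G' : G₁.Subgraph) (b : β) (x y : α × β) :
    (G'.map (boxProdLeft G₁ G₂ b).toHom).Adj x y ↔ G'.Adj x.1 y.1 ∧ x.2 = b ∧ y.2 = b := by
  rw [map_adj]
  constructor
  · rintro ⟨a, a', h, rfl, rfl⟩
    exact ⟨h, rfl, rfl⟩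
  · rintro ⟨h, hx, hy⟩
    exact ⟨x.1, y.1, h, Prod.ext rfl hx.symm, Prod.ext rfl hy.symm⟩

theorem map_boxProdRight_adj (G' : G₂.Subgraph) (a : α) (x y : α × β) :
    (G'.map (boxProdRight G₁ G₂ a).toHom).Adj x y ↔ G'.Adj x.2 y.2 ∧ x.1 = a ∧ y.1 = a := by
  rw [map_adj]
  constructor
  · rintro ⟨b, b', h, rfl, rfl⟩
    exact ⟨h, rfl, rfl⟩
  · rintro ⟨h, hx, hy⟩
    exact ⟨x.2, y.2, h, Prod.ext hx.symm rfl, Prod.ext hy.symm rfl⟩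

theorem dvd_card_neighborSet {γ : Type} {H : SimpleGraph γ} {G : SimpleGraph α}
    {G' : G.Subgraph} {k : ℕ} (hH : ∀ a, Nat.card (H.neighborSet a) = k)
    (φ : H ≃g G'.coe) (v : α) : k ∣ Nat.card (G'.neighborSet v) := by
  by_cases hv : v ∈ G'.verts
  · have : Nat.card (G'.neighborSet v) = k := by
      rw [← hH (φ.symm ⟨v, hv⟩)]
      exact Nat.card_congr
        ((coeNeighborSetEquiv ⟨v, hv⟩).symm.trans (φ.symm.mapNeighborSet _))
    exact this ▸ dvd_rfl
  · have : G'.neighborSet v = ∅ := Set.eq_empty_of_forall_notMem fun w h => hv (G'.edge_vert h)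
    simp [this]

end SimpleGraph.Subgraph

namespace GraphDivides

variable {α β γ : Type} {H : SimpleGraph α} {G : SimpleGraph β}

theorem refl (G : SimpleGraph β) : GraphDivides G G :=
  graphDivides_iff.2 ⟨Unit, fun _ => ⊤, fun _ => ⟨Subgraph.topIso.symm⟩,
    fun _ _ h => ⟨(), h, fun _ _ => rfl⟩⟩

theorem bot : GraphDivides H (⊥ : SimpleGraph β) :=
  graphDivides_iff.2 ⟨Empty, Empty.elim, fun i => i.elim, fun _ _ h => h.elim⟩

theorem map_iso {G' : SimpleGraph γ} (h : GraphDivides H G) (e : G ≃g G') :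
    GraphDivides H G' := by
  obtain ⟨ι, f, hiso, hpart⟩ := graphDivides_iff.1 h
  refine graphDivides_iff.2 ⟨ι, fun i => (f i).map e.toHom,
    fun i => (hiso i).map fun φ => φ.trans (e.toCopy.isoSubgraphMap (f i)), fun x y hxy => ?_⟩
  simpa only [Subgraph.map_iso_adj] using hpart _ _ (e.symm.map_adj_iff.2 hxy)

theorem boxProd {G₁ : SimpleGraph β} {G₂ : SimpleGraph γ} (h₁ : GraphDivides H G₁)
    (h₂ : GraphDivides H G₂) : GraphDivides H (G₁ □ G₂) := by
  obtain ⟨ι₁, f₁, hiso₁, hpart₁⟩ := graphDivides_iff.1 h₁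
  obtain ⟨ι₂, f₂, hiso₂, hpart₂⟩ := graphDivides_iff.1 h₂
  refine graphDivides_iff.2 ⟨(ι₁ × γ) ⊕ (β × ι₂),
    Sum.elim (fun p => (f₁ p.1).map (boxProdLeft G₁ G₂ p.2).toHom)
      (fun p => (f₂ p.2).map (boxProdRight G₁ G₂ p.1).toHom), ?_, ?_⟩
  · rintro (⟨i, b⟩ | ⟨a, j⟩)
    · exact (hiso₁ i).map fun φ => φ.trans ((boxProdLeft G₁ G₂ b).toCopy.isoSubgraphMap (f₁ i))
    · exact (hiso₂ j).map fun φ => φ.trans ((boxProdRight G₁ G₂ a).toCopy.isoSubgraphMap (f₂ j))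
  rintro ⟨a, b⟩ ⟨a', b'⟩ (⟨hadj, rfl⟩ | ⟨hadj, rfl⟩)
  · obtain ⟨i, hi, huniq⟩ := hpart₁ a a' hadj
    refine ⟨.inl (i, b), (Subgraph.map_boxProdLeft_adj ..).2 ⟨hi, rfl, rfl⟩, ?_⟩
    rintro (⟨i', c⟩ | ⟨c, j⟩) h
    · simp only [Sum.elim_inl, Subgraph.map_boxProdLeft_adj] at h
      obtain ⟨h, rfl, -⟩ := h
      rw [huniq i' h]
    · simp only [Sum.elim_inr, Subgraph.map_boxProdRight_adj] at h
      exact absurd (h.2.1.trans h.2.2.symm) hadj.ne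
  · obtain ⟨j, hj, huniq⟩ := hpart₂ b b' hadj
    refine ⟨.inr (a, j), (Subgraph.map_boxProdRight_adj ..).2 ⟨hj, rfl, rfl⟩, ?_⟩
    rintro (⟨i, c⟩ | ⟨c, j'⟩) h
    · simp only [Sum.elim_inl, Subgraph.map_boxProdLeft_adj] at h
      exact absurd (h.2.1.trans h.2.2.symm) hadj.ne
    · simp only [Sum.elim_inr, Subgraph.map_boxProdRight_adj] at h
      obtain ⟨h, rfl, -⟩ := h
      rw [huniq j' h]

theorem dvd_card_neighborSet {k : ℕ} (hH : ∀ a, Nat.card (H.neighborSet a) = k)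
    (h : GraphDivides H G) (v : β) [Finite (G.neighborSet v)] : k ∣ Nat.card (G.neighborSet v) := by
  classical
  obtain ⟨ι, f, hiso, hpart⟩ := graphDivides_iff.1 h
  choose piece hpiece huniq using fun w : G.neighborSet v => hpart v w w.2
  have fiber (i : ι) : {w // piece w = i} ≃ (f i).neighborSet v :=
    { toFun w := ⟨w.1, by obtain ⟨w, rfl⟩ := w; exact hpiece w⟩
      invFun u := ⟨⟨u, (f i).adj_sub u.2⟩, (huniq ⟨u, (f i).adj_sub u.2⟩ i u.2).symm⟩
      left_inv _ := rfl
      right_inv _ := rfl }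
  have := Fintype.ofFinite (G.neighborSet v)
  rw [Nat.card_eq_fintype_card, ← Finset.card_univ,
    Finset.card_eq_sum_card_fiberwise fun w _ => Finset.mem_image_of_mem piece (Finset.mem_univ w)]
  refine Finset.dvd_sum fun i _ => ?_
  rw [← Fintype.card_subtype, ← Nat.card_eq_fintype_card, Nat.card_congr (fiber i)]
  exact (hiso i).elim fun φ => Subgraph.dvd_card_neighborSet hH φ v

end GraphDivides

theorem hammingDist_append {β : Type*} [DecidableEq β] {a b : ℕ} (x x' : Fin a → β)
    (y y' : Fin b → β) :
    hammingDist (Fin.append x y) (Fin.append x' y') = hammingDist x x' + hammingDist y y' := by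
  simp only [hammingDist, Finset.card_filter, Fin.sum_univ_add, Fin.append_left, Fin.append_right]

theorem cube_zero : cube 0 = ⊥ := by
  ext x y
  simp [cube, hammingDist]

def cubeAddIso (a b : ℕ) : (cube a).boxProd (cube b) ≃g cube (a + b) where
  toEquiv := Fin.appendEquiv a b
  map_rel_iff' {p q} := by
    show hammingDist (Fin.append p.1 p.2) (Fin.append q.1 q.2) = 1 ↔ _
    simp only [cube, boxProd_adj, hammingDist_append, ← hammingDist_eq_zero]
    omega

theorem cube_adj_iff {n : ℕ} {x y : Fin n → ZMod 2} :
    (cube n).Adj x y ↔ ∃ c, y = x + Pi.single c 1 := by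
  have zmod_two_eq_add_one : ∀ a b : ZMod 2, a ≠ b → b = a + 1 := by decide
  constructor
  · intro h
    obtain ⟨c, hc⟩ := Finset.card_eq_one.1 h
    have hdiff : ∀ i, x i ≠ y i ↔ i = c := by simpa using Finset.ext_iff.1 hc
    refine ⟨c, funext fun i => ?_⟩
    by_cases hic : i = c
    · subst hic
      simpa using zmod_two_eq_add_one _ _ ((hdiff i).2 rfl)
    · simpa [hic] using (not_imp_comm.1 (hdiff i).1 hic).symm
  · rintro ⟨c, rfl⟩
    refine Finset.card_eq_one.2 ⟨c, Finset.ext fun i => ?_⟩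
    by_cases hic : i = c <;> simp [hic]

theorem card_neighborSet_cube {n : ℕ} (x : Fin n → ZMod 2) :
    Nat.card ((cube n).neighborSet x) = n := by
  have hrange : (cube n).neighborSet x = Set.range fun c => x + Pi.single c 1 := by
    ext y
    simp only [mem_neighborSet, cube_adj_iff, Set.mem_range, eq_comm]
  rw [hrange, Nat.card_range_of_injective, Nat.card_eq_fintype_card, Fintype.card_fin]
  intro c c' h
  by_contra hne
  simpa [Pi.single_apply, hne] using congrFun h c

theorem graphDivides_cube_mul (k m : ℕ) : GraphDivides (cube k) (cube (k * m)) := by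
  induction m with
  | zero => exact cube_zero ▸ .bot
  | succ m ih => exact (ih.boxProd (.refl _)).map_iso (cubeAddIso (k * m) k)

theorem cube_divides_cube_iff_general (k n : ℕ) :
    GraphDivides (cube k) (cube n) ↔ k ∣ n := by
  constructor
  · intro h
    simpa only [card_neighborSet_cube] using h.dvd_card_neighborSet card_neighborSet_cube 0
  · rintro ⟨m, rfl⟩
    exact graphDivides_cube_mul k m

theorem cube_divides_cube_iff (k n : ℕ) (hk : 1 ≤ k) (hn : 1 ≤ n) :
    GraphDivides (cube k) (cube n) ↔ k ∣ n :=
  cube_divides_cube_iff_general k n
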